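/- arXiv:math/0603391 — 4 statements merged into one kernel-verified Lean document; each statement's English description precedes it below -/
import Mathlib

section
/- Let (C₂, C₁, C₀) be a 2-crossed module of commutative algebras with associated quadratic module L →δ M →∂ N, where M = C₁/P₃, L = C₂/P₃′. Then ker∂/Im δ ≅ ker∂₁/Im ∂₂, i.e., the second homotopy modules of the 2-crossed module and its associated quadratic module are isomorphic. -/
/-- A 2-crossed module of commutative algebras: a complex
`C₂ →d2 C₁ →d1 C₀` of `C₀`-algebras in which `d2` is a crossed module
(for the action `actL` of `C₁` on `C₂`), together with a `C₀`-bilinear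
Peiffer lifting `lift : C₁ × C₁ → C₂` satisfying the axioms 2CM1–2CM5. -/
structure TwoCrossedModule (C₂ C₁ C₀ : Type*)
    [CommRing C₂] [CommRing C₁] [CommRing C₀] where
  d2 : C₂ →+* C₁
  d1 : C₁ →+* C₀
  d1_d2 : ∀ x, d1 (d2 x) = 0
  /-- action of `C₀` on `C₁` -/
  act1 : C₀ → C₁ → C₁
  /-- action of `C₀` on `C₂` -/
  act2 : C₀ → C₂ → C₂
  /-- action of `C₁` on `C₂` -/
  actL : C₁ → C₂ → C₂
  /-- the Peiffer lifting `{ − ⊗ − }` -/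
  lift : C₁ → C₁ → C₂
  act1_add : ∀ r c c', act1 r (c + c') = act1 r c + act1 r c'
  add_act1 : ∀ r r' c, act1 (r + r') c = act1 r c + act1 r' c
  act1_act1 : ∀ r r' c, act1 (r * r') c = act1 r (act1 r' c)
  act1_mul : ∀ r c c', act1 r (c * c') = act1 r c * c'
  d1_act1 : ∀ r c, d1 (act1 r c) = d1 c * r
  act2_add : ∀ r x x', act2 r (x + x') = act2 r x + act2 r x'
  add_act2 : ∀ r r' x, act2 (r + r') x = act2 r x + act2 r' x
  act2_act2 : ∀ r r' x, act2 (r * r') x = act2 r (act2 r' x)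
  act2_mul : ∀ r x x', act2 r (x * x') = act2 r x * x'
  actL_add : ∀ y x x', actL y (x + x') = actL y x + actL y x'
  add_actL : ∀ y y' x, actL (y + y') x = actL y x + actL y' x
  /-- `d2` is equivariant: `∂₂(x·y) = ∂₂(x) y` -/
  d2_actL : ∀ y x, d2 (actL y x) = d2 x * y
  /-- the Peiffer identity for the crossed module `d2` -/
  peiffer2 : ∀ x x', actL (d2 x) x' = x' * x
  /-- `C₁` acts on `C₂` via `C₀`: `(x·y)·z = x·(y·z)` -/
  actL_via : ∀ z y x, act2 z (actL y x) = actL (act1 z y) x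
  lift_add_left : ∀ y₀ y₀' y₁, lift (y₀ + y₀') y₁ = lift y₀ y₁ + lift y₀' y₁
  lift_add_right : ∀ y₀ y₁ y₁', lift y₀ (y₁ + y₁') = lift y₀ y₁ + lift y₀ y₁'
  /-- 2CM1 -/
  cm1 : ∀ y₀ y₁, d2 (lift y₀ y₁) = y₀ * y₁ - act1 (d1 y₁) y₀
  /-- 2CM2 -/
  cm2 : ∀ x₁ x₂, lift (d2 x₁) (d2 x₂) = x₁ * x₂
  /-- 2CM3 -/
  cm3 : ∀ y₀ y₁ y₂, lift y₀ (y₁ * y₂) = lift (y₀ * y₁) y₂ + act2 (d1 y₂) (lift y₀ y₁)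
  /-- 2CM4 a) -/
  cm4a : ∀ x y, lift (d2 x) y = actL y x - act2 (d1 y) x
  /-- 2CM4 b) -/
  cm4b : ∀ y x, lift y (d2 x) = actL y x
  /-- 2CM5 -/
  cm5a : ∀ y₀ y₁ z, act2 z (lift y₀ y₁) = lift (act1 z y₀) y₁
  cm5b : ∀ y₀ y₁ z, act2 z (lift y₀ y₁) = lift y₀ (act1 z y₁)

namespace TwoCrossedModule

variable {C₂ C₁ C₀ : Type*} [CommRing C₂] [CommRing C₁] [CommRing C₀]

/-- The Peiffer element `⟨x,y⟩ = xy − x·∂₁y` of the pre-crossed module `d1`. -/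
def pf (T : TwoCrossedModule C₂ C₁ C₀) (x y : C₁) : C₁ :=
  x * y - T.act1 (T.d1 y) x

/-- The ideal `P₃` of `C₁` generated by the triple Peiffer elements
`⟨⟨x,y⟩,z⟩` and `⟨x,⟨y,z⟩⟩`. -/
def P3 (T : TwoCrossedModule C₂ C₁ C₀) : Ideal C₁ :=
  Ideal.span {w : C₁ | ∃ x y z : C₁, w = T.pf (T.pf x y) z ∨ w = T.pf x (T.pf y z)}

/-- The ideal `P₃′` of `C₂` generated by the elements `{⟨x,y⟩ ⊗ z}` and
`{x ⊗ ⟨y,z⟩}`. -/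
def P3' (T : TwoCrossedModule C₂ C₁ C₀) : Ideal C₂ :=
  Ideal.span {w : C₂ | ∃ x y z : C₁, w = T.lift (T.pf x y) z ∨ w = T.lift x (T.pf y z)}

end TwoCrossedModule

/-! The isomorphism is induced by the projection `C₁ → C₁/P₃`. It maps `ker ∂₁` onto `ker ∂`,
and since `P₃ = ∂₂(P₃′)` lies in `Im ∂₂`, an element of `C₁` is a boundary exactly when its class
modulo `P₃` is one. -/

namespace QuotientAddGroup

variable {K A : Type*} [AddCommGroup K] [AddCommGroup A] {I : AddSubgroup K} {B : AddSubgroup A}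

noncomputable def equivOfSurjectiveOfEqComap (f : K →+ A) (hf : Function.Surjective f)
    (hI : I = B.comap f) : K ⧸ I ≃+ A ⧸ B :=
  liftEquiv I (φ := (mk' B).comp f) ((mk'_surjective B).comp hf)
    (by rw [hI, ← AddMonoidHom.comap_ker, ker_mk'])

end QuotientAddGroup

namespace Ideal

variable {R S : Type*} [CommRing R] [CommRing S] (P : Ideal R) (f : R →+* S)
  (hf : ∀ a ∈ P, f a = 0)

def Quotient.mkOnKer :
    (RingHom.ker f).toAddSubgroup →+ (RingHom.ker (Quotient.lift P f hf)).toAddSubgroup :=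
  ((Quotient.mk P).toAddMonoidHom.comp (RingHom.ker f).toAddSubgroup.subtype).codRestrict
    (RingHom.ker (Quotient.lift P f hf)).toAddSubgroup fun x => by
    simpa using (RingHom.mem_ker.mp x.2 : f x = 0)

@[simp]
theorem Quotient.coe_mkOnKer (x : (RingHom.ker f).toAddSubgroup) :
    (Quotient.mkOnKer P f hf x : R ⧸ P) = Quotient.mk P x :=
  rfl

theorem Quotient.mkOnKer_surjective : Function.Surjective (Quotient.mkOnKer P f hf) := by
  rintro ⟨a, ha⟩
  obtain ⟨x, rfl⟩ := Quotient.mk_surjective a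
  have hx : f x = 0 := by simpa [RingHom.mem_ker] using ha
  exact ⟨⟨x, hx⟩, rfl⟩

variable {R' : Type*} [CommRing R'] {P} {P' : Ideal R'} {g : R' →+* R}

theorem mk_mem_range_quotientMap_iff (hg : P' ≤ P.comap g) (hP : (P : Set R) ⊆ Set.range g)
    (x : R) : Quotient.mk P x ∈ Set.range (quotientMap P g hg) ↔ x ∈ Set.range g := by
  constructor
  · rintro ⟨c, hc⟩
    obtain ⟨z, rfl⟩ := Quotient.mk_surjective c
    rw [quotientMap_mk, Quotient.mk_eq_mk_iff_sub_mem] at hc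
    obtain ⟨w, hw⟩ := hP hc
    exact ⟨z - w, by rw [map_sub, hw, sub_sub_cancel]⟩
  · rintro ⟨z, rfl⟩
    exact ⟨Quotient.mk P' z, quotientMap_mk⟩

theorem range_addSubgroupOf_ker_eq_comap_mkOnKer (hg : P' ≤ P.comap g)
    (hP : (P : Set R) ⊆ Set.range g) :
    (AddMonoidHom.range g.toAddMonoidHom).addSubgroupOf (RingHom.ker f).toAddSubgroup =
      ((AddMonoidHom.range (quotientMap P g hg).toAddMonoidHom).addSubgroupOf
        (RingHom.ker (Quotient.lift P f hf)).toAddSubgroup).comap (Quotient.mkOnKer P f hf) := by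
  ext x
  simp only [AddSubgroup.mem_comap, AddSubgroup.mem_addSubgroupOf, Quotient.coe_mkOnKer,
    AddMonoidHom.mem_range, RingHom.toAddMonoidHom_eq_coe, AddMonoidHom.coe_coe]
  exact (mk_mem_range_quotientMap_iff hg hP x).symm

end Ideal

namespace TwoCrossedModule

variable {C₂ C₁ C₀ : Type*} [CommRing C₂] [CommRing C₁] [CommRing C₀]
  (T : TwoCrossedModule C₂ C₁ C₀)

def rangeD2 : Ideal C₁ where
  carrier := Set.range T.d2
  add_mem' := by
    rintro _ _ ⟨x, rfl⟩ ⟨y, rfl⟩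
    exact ⟨x + y, map_add _ _ _⟩
  zero_mem' := ⟨0, map_zero _⟩
  smul_mem' := by
    rintro r _ ⟨x, rfl⟩
    exact ⟨T.actL r x, by rw [T.d2_actL, smul_eq_mul, mul_comm]⟩

theorem P3_subset_range_d2 : (T.P3 : Set C₁) ⊆ Set.range T.d2 := by
  suffices T.P3 ≤ T.rangeD2 from this
  rw [P3, Ideal.span_le]
  rintro _ ⟨x, y, z, rfl | rfl⟩
  · exact ⟨_, T.cm1 _ _⟩
  · exact ⟨_, T.cm1 _ _⟩

end TwoCrossedModule

/-- For a 2-crossed module of commutative algebras with associated quadratic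
module `L = C₂/P₃′ →δ M = C₁/P₃ →∂ N = C₀`, the second homotopy modules
agree: `ker ∂ / Im δ ≅ ker ∂₁ / Im ∂₂`. -/
theorem pi2_iso {C₂ C₁ C₀ : Type*}
    [CommRing C₂] [CommRing C₁] [CommRing C₀]
    (T : TwoCrossedModule C₂ C₁ C₀)
    (h0 : ∀ w ∈ T.P3, T.d1 w = 0)
    (hle : T.P3' ≤ T.P3.comap T.d2) :
    Nonempty
      ((↥((RingHom.ker (Ideal.Quotient.lift T.P3 T.d1 h0)).toAddSubgroup) ⧸
          (AddMonoidHom.range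
            (Ideal.quotientMap T.P3 T.d2 hle).toAddMonoidHom).addSubgroupOf
            ((RingHom.ker (Ideal.Quotient.lift T.P3 T.d1 h0)).toAddSubgroup))
        ≃+
       (↥((RingHom.ker T.d1).toAddSubgroup) ⧸
          (AddMonoidHom.range T.d2.toAddMonoidHom).addSubgroupOf
            ((RingHom.ker T.d1).toAddSubgroup))) :=
  ⟨(QuotientAddGroup.equivOfSurjectiveOfEqComap _ (Ideal.Quotient.mkOnKer_surjective T.P3 T.d1 h0)
    (Ideal.range_addSubgroupOf_ker_eq_comap_mkOnKer T.d1 h0 hle T.P3_subset_range_d2)).symm⟩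
end

section
/- Let E be a simplicial commutative algebra. For x ∈ NE₁ and y ∈ NE₂, the element C_{(2,1),(0)}(x⊗y) = s₂s₁x(s₀y − s₁y + s₂y) satisfies d₃(C_{(2,1),(0)}(x⊗y)) = s₁x(s₀d₂y − s₁d₂y + y), and this element lies in ker d₀ · (ker d₁ ∩ ker d₂). -/
/-- The 3-truncation of a simplicial commutative algebra: algebras
`E₀, E₁, E₂, E₃` with face maps `dᵢ` and degeneracy maps `sᵢ` satisfying the
simplicial identities.  `d10, d11 : E₁ → E₀` are `d₀¹, d₁¹`; `s00 : E₀ → E₁`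
is `s₀⁰`; `d20, d21, d22 : E₂ → E₁` are `d₀², d₁², d₂²`; `s10, s11 : E₁ → E₂`
are `s₀¹, s₁¹`; `d30, …, d33 : E₃ → E₂` are `d₀³, …, d₃³`; and
`s20, s21, s22 : E₂ → E₃` are `s₀², s₁², s₂²`. -/
structure SimpAlg3 (E₀ E₁ E₂ E₃ : Type*)
    [CommRing E₀] [CommRing E₁] [CommRing E₂] [CommRing E₃] where
  d10 : E₁ →+* E₀
  d11 : E₁ →+* E₀
  s00 : E₀ →+* E₁
  d20 : E₂ →+* E₁
  d21 : E₂ →+* E₁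
  d22 : E₂ →+* E₁
  s10 : E₁ →+* E₂
  s11 : E₁ →+* E₂
  d30 : E₃ →+* E₂
  d31 : E₃ →+* E₂
  d32 : E₃ →+* E₂
  d33 : E₃ →+* E₂
  s20 : E₂ →+* E₃
  s21 : E₂ →+* E₃
  s22 : E₂ →+* E₃
  -- simplicial identities dᵢdⱼ = dⱼ₋₁dᵢ (i < j)
  dd_01 : ∀ x, d10 (d21 x) = d10 (d20 x)
  dd_02 : ∀ x, d10 (d22 x) = d11 (d20 x)
  dd_12 : ∀ x, d11 (d22 x) = d11 (d21 x)
  ddd_01 : ∀ x, d20 (d31 x) = d20 (d30 x)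
  ddd_02 : ∀ x, d20 (d32 x) = d21 (d30 x)
  ddd_03 : ∀ x, d20 (d33 x) = d22 (d30 x)
  ddd_12 : ∀ x, d21 (d32 x) = d21 (d31 x)
  ddd_13 : ∀ x, d21 (d33 x) = d22 (d31 x)
  ddd_23 : ∀ x, d22 (d33 x) = d22 (d32 x)
  -- simplicial identities dᵢsⱼ
  ds_00 : ∀ r, d10 (s00 r) = r
  ds_10 : ∀ r, d11 (s00 r) = r
  ds2_00 : ∀ x, d20 (s10 x) = x
  ds2_10 : ∀ x, d21 (s10 x) = x
  ds2_20 : ∀ x, d22 (s10 x) = s00 (d11 x)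
  ds2_01 : ∀ x, d20 (s11 x) = s00 (d10 x)
  ds2_11 : ∀ x, d21 (s11 x) = x
  ds2_21 : ∀ x, d22 (s11 x) = x
  ds3_00 : ∀ x, d30 (s20 x) = x
  ds3_10 : ∀ x, d31 (s20 x) = x
  ds3_20 : ∀ x, d32 (s20 x) = s10 (d21 x)
  ds3_30 : ∀ x, d33 (s20 x) = s10 (d22 x)
  ds3_01 : ∀ x, d30 (s21 x) = s10 (d20 x)
  ds3_11 : ∀ x, d31 (s21 x) = x
  ds3_21 : ∀ x, d32 (s21 x) = x
  ds3_31 : ∀ x, d33 (s21 x) = s11 (d22 x)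
  ds3_02 : ∀ x, d30 (s22 x) = s11 (d20 x)
  ds3_12 : ∀ x, d31 (s22 x) = s11 (d21 x)
  ds3_22 : ∀ x, d32 (s22 x) = x
  ds3_32 : ∀ x, d33 (s22 x) = x
  -- simplicial identities sᵢsⱼ = sⱼ₊₁sᵢ (i ≤ j)
  ss_00 : ∀ r, s10 (s00 r) = s11 (s00 r)
  sss_00 : ∀ x, s20 (s10 x) = s21 (s10 x)
  sss_01 : ∀ x, s20 (s11 x) = s22 (s10 x)
  sss_11 : ∀ x, s21 (s11 x) = s22 (s11 x)

namespace SimpAlg3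

variable {E₀ E₁ E₂ E₃ : Type*}
  [CommRing E₀] [CommRing E₁] [CommRing E₂] [CommRing E₃]

/-- `NE₁ = ker d₀¹`, the degree-1 term of the Moore complex. -/
def NE1 (S : SimpAlg3 E₀ E₁ E₂ E₃) : Set E₁ := {x : E₁ | S.d10 x = 0}

/-- The Peiffer bracket `⟨a,b⟩ = ab − a·∂₁b = ab − a·s₀d₁(b)` on `NE₁`,
for the pre-crossed module `∂₁ = d₁ : NE₁ → NE₀` with `NE₀ = E₀` acting via
`s₀` and multiplication. -/
def pf (S : SimpAlg3 E₀ E₁ E₂ E₃) (a b : E₁) : E₁ :=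
  a * b - a * S.s00 (S.d11 b)

/-- The ideal `P₃(∂₁)` generated by the triple Peiffer elements
`⟨⟨x,y⟩,z⟩` and `⟨x,⟨y,z⟩⟩` for `x, y, z ∈ NE₁`. -/
def P3 (S : SimpAlg3 E₀ E₁ E₂ E₃) : Ideal E₁ :=
  Ideal.span {w : E₁ | ∃ x ∈ S.NE1, ∃ y ∈ S.NE1, ∃ z ∈ S.NE1,
    w = S.pf (S.pf x y) z ∨ w = S.pf x (S.pf y z)}

/-- The representative `s₁x(s₁y − s₀y) ∈ E₂` of `ω′(x,y)`. -/
def omegaRep (S : SimpAlg3 E₀ E₁ E₂ E₃) (x y : E₁) : E₂ :=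
  S.s11 x * (S.s11 y - S.s10 y)

/-- The ideal `∂₃(NE₃)` of `E₂` (as an ideal, the span of the image of
`NE₃ = ker d₀³ ∩ ker d₁³ ∩ ker d₂³` under `d₃³`). -/
def bdry3 (S : SimpAlg3 E₀ E₁ E₂ E₃) : Ideal E₂ :=
  Ideal.span {w : E₂ | ∃ z : E₃, S.d30 z = 0 ∧ S.d31 z = 0 ∧ S.d32 z = 0 ∧ w = S.d33 z}

/-- The ideal of `E₂` whose image in `NE₂/∂₃(NE₃)` is `P₃′(∂₁)`: it is
generated by `∂₃(NE₃)` together with the elements `ω′(⟨x,y⟩,z)` and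
`ω′(x,⟨y,z⟩)` for `x, y, z ∈ NE₁`. -/
def P3' (S : SimpAlg3 E₀ E₁ E₂ E₃) : Ideal E₂ :=
  S.bdry3 ⊔ Ideal.span {w : E₂ | ∃ x ∈ S.NE1, ∃ y ∈ S.NE1, ∃ z ∈ S.NE1,
    w = S.omegaRep (S.pf x y) z ∨ w = S.omegaRep x (S.pf y z)}

end SimpAlg3

namespace SimpAlg3

variable {E₀ E₁ E₂ E₃ : Type*}
  [CommRing E₀] [CommRing E₁] [CommRing E₂] [CommRing E₃]
  (S : SimpAlg3 E₀ E₁ E₂ E₃)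

def C210 (x : E₁) (y : E₂) : E₃ :=
  S.s22 (S.s11 x) * (S.s20 y - S.s21 y + S.s22 y)

theorem d33_C210 (x : E₁) (y : E₂) :
    S.d33 (S.C210 x y) = S.s11 x * (S.s10 (S.d22 y) - S.s11 (S.d22 y) + y) := by
  rw [C210, map_mul, map_add, map_sub, S.ds3_32, S.ds3_30, S.ds3_31, S.ds3_32]

theorem s11_mem_ker_d20 {x : E₁} (hx : S.d10 x = 0) : S.s11 x ∈ RingHom.ker S.d20 := by
  rw [RingHom.mem_ker, S.ds2_01, hx, map_zero]

theorem d21_s10_sub_s11_add (z : E₁) (y : E₂) :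
    S.d21 (S.s10 z - S.s11 z + y) = S.d21 y := by
  rw [map_add, map_sub, S.ds2_10, S.ds2_11, sub_self, zero_add]

theorem d22_s10_sub_s11_add_self (y : E₂) :
    S.d22 (S.s10 (S.d22 y) - S.s11 (S.d22 y) + y) = S.s00 (S.d11 (S.d21 y)) := by
  rw [map_add, map_sub, S.ds2_20, S.ds2_21, S.dd_12, sub_add_cancel]

theorem s10_sub_s11_add_mem_ker_d21_inf_ker_d22 {y : E₂} (hy1 : S.d21 y = 0) :
    S.s10 (S.d22 y) - S.s11 (S.d22 y) + y ∈ RingHom.ker S.d21 ⊓ RingHom.ker S.d22 :=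
  ⟨by rw [SetLike.mem_coe, RingHom.mem_ker, d21_s10_sub_s11_add, hy1],
    by rw [SetLike.mem_coe, RingHom.mem_ker, d22_s10_sub_s11_add_self, hy1, map_zero, map_zero]⟩

end SimpAlg3

theorem C210_formula_general {E₀ E₁ E₂ E₃ : Type*}
    [CommRing E₀] [CommRing E₁] [CommRing E₂] [CommRing E₃]
    (S : SimpAlg3 E₀ E₁ E₂ E₃)
    (x : E₁) (hx : S.d10 x = 0)
    (y : E₂) (hy1 : S.d21 y = 0) :
    S.d33 (S.s22 (S.s11 x) * (S.s20 y - S.s21 y + S.s22 y)) =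
      S.s11 x * (S.s10 (S.d22 y) - S.s11 (S.d22 y) + y) ∧
    S.s11 x * (S.s10 (S.d22 y) - S.s11 (S.d22 y) + y) ∈
      RingHom.ker S.d20 * (RingHom.ker S.d21 ⊓ RingHom.ker S.d22) :=
  ⟨S.d33_C210 x y,
    Ideal.mul_mem_mul (S.s11_mem_ker_d20 hx) (S.s10_sub_s11_add_mem_ker_d21_inf_ker_d22 hy1)⟩

/-- For a simplicial commutative algebra, `x ∈ NE₁` and `y ∈ NE₂`:
`d₃(C₍₂,₁₎,₍₀₎(x⊗y)) = d₃(s₂s₁x(s₀y − s₁y + s₂y)) = s₁x(s₀d₂y − s₁d₂y + y)`,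
and this element lies in `ker d₀ · (ker d₁ ∩ ker d₂)`. -/
theorem C210_formula {E₀ E₁ E₂ E₃ : Type*}
    [CommRing E₀] [CommRing E₁] [CommRing E₂] [CommRing E₃]
    (S : SimpAlg3 E₀ E₁ E₂ E₃)
    (x : E₁) (hx : S.d10 x = 0)
    (y : E₂) (hy0 : S.d20 y = 0) (hy1 : S.d21 y = 0) :
    S.d33 (S.s22 (S.s11 x) * (S.s20 y - S.s21 y + S.s22 y)) =
      S.s11 x * (S.s10 (S.d22 y) - S.s11 (S.d22 y) + y) ∧
    S.s11 x * (S.s10 (S.d22 y) - S.s11 (S.d22 y) + y) ∈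
      RingHom.ker S.d20 * (RingHom.ker S.d21 ⊓ RingHom.ker S.d22) :=
  C210_formula_general S x hx y hy1
end

section
/- Let E be a simplicial commutative algebra. For x, y ∈ NE₂ = ker d₀ ∩ ker d₁, d₃(C_{(2),(1)}(x⊗y)) = x(s₁d₂y − y), which lies in (ker d₀ ∩ ker d₁)(ker d₀ ∩ ker d₂), where C_{(2),(1)}(x⊗y) = s₂x(s₁y − s₂y). -/
namespace SimpAlg3

variable {E₀ E₁ E₂ E₃ : Type*} [CommRing E₀] [CommRing E₁] [CommRing E₂] [CommRing E₃]
  (S : SimpAlg3 E₀ E₁ E₂ E₃)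

theorem d33_s22_mul_sub_s22 (x y : E₂) :
    S.d33 (S.s22 x * (S.s21 y - S.s22 y)) = x * (S.s11 (S.d22 y) - y) := by
  rw [map_mul, map_sub, S.ds3_32, S.ds3_31, S.ds3_32]

theorem s11_d22_sub_mem_ker_d20_inf_ker_d22 {y : E₂} (hy0 : S.d20 y = 0) :
    S.s11 (S.d22 y) - y ∈ RingHom.ker S.d20 ⊓ RingHom.ker S.d22 := by
  constructor
  · change S.d20 _ = 0
    rw [map_sub, S.ds2_01, S.dd_02, hy0, map_zero, map_zero, sub_zero]
  · change S.d22 _ = 0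
    rw [map_sub, S.ds2_21, sub_self]

end SimpAlg3

theorem C21_formula_general {E₀ E₁ E₂ E₃ : Type*}
    [CommRing E₀] [CommRing E₁] [CommRing E₂] [CommRing E₃]
    (S : SimpAlg3 E₀ E₁ E₂ E₃)
    (x y : E₂) (hx0 : S.d20 x = 0) (hx1 : S.d21 x = 0)
    (hy0 : S.d20 y = 0) :
    S.d33 (S.s22 x * (S.s21 y - S.s22 y)) = x * (S.s11 (S.d22 y) - y) ∧
    x * (S.s11 (S.d22 y) - y) ∈
      (RingHom.ker S.d20 ⊓ RingHom.ker S.d21) *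
        (RingHom.ker S.d20 ⊓ RingHom.ker S.d22) :=
  ⟨S.d33_s22_mul_sub_s22 x y,
    Ideal.mul_mem_mul ⟨hx0, hx1⟩ (S.s11_d22_sub_mem_ker_d20_inf_ker_d22 hy0)⟩

/-- For a simplicial commutative algebra and `x, y ∈ NE₂ = ker d₀ ∩ ker d₁`:
`d₃(C₍₂₎,₍₁₎(x⊗y)) = d₃(s₂x(s₁y − s₂y)) = x(s₁d₂y − y)`, and this element lies
in `(ker d₀ ∩ ker d₁)(ker d₀ ∩ ker d₂)`. -/
theorem C21_formula {E₀ E₁ E₂ E₃ : Type*}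
    [CommRing E₀] [CommRing E₁] [CommRing E₂] [CommRing E₃]
    (S : SimpAlg3 E₀ E₁ E₂ E₃)
    (x y : E₂) (hx0 : S.d20 x = 0) (hx1 : S.d21 x = 0)
    (hy0 : S.d20 y = 0) (hy1 : S.d21 y = 0) :
    S.d33 (S.s22 x * (S.s21 y - S.s22 y)) = x * (S.s11 (S.d22 y) - y) ∧
    x * (S.s11 (S.d22 y) - y) ∈
      (RingHom.ker S.d20 ⊓ RingHom.ker S.d21) *
        (RingHom.ker S.d20 ⊓ RingHom.ker S.d22) :=
  C21_formula_general S x y hx0 hx1 hy0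
end

section
/- Let E be a simplicial commutative algebra with ω′ : NE₁ × NE₁ → NE₂/∂₃(NE₃) given by ω′(x,y) = s₁x(s₁y − s₀y) + ∂₃(NE₃) and ∂̄₂ induced by d₂. Then for all x,y,z ∈ NE₁: ∂̄₂ ω′(x, ⟨y,z⟩) = ⟨x, ⟨y,z⟩⟩ and ∂̄₂ ω′(⟨x,y⟩, z) = ⟨⟨x,y⟩, z⟩, where ⟨a,b⟩ = ab − a·s₀d₁b. Consequently ∂̄₂(P₃′(∂₁)) = P₃(∂₁). -/
namespace SimpAlg3

variable {E₀ E₁ E₂ E₃ : Type*} [CommRing E₀] [CommRing E₁] [CommRing E₂] [CommRing E₃]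
  (S : SimpAlg3 E₀ E₁ E₂ E₃)

theorem d22_omegaRep (a b : E₁) : S.d22 (S.omegaRep a b) = S.pf a b := by
  simp only [omegaRep, pf, map_mul, map_sub, S.ds2_21, S.ds2_20, mul_sub]

theorem image_d22_omegaRep_peiffer :
    S.d22 '' {w | ∃ x ∈ S.NE1, ∃ y ∈ S.NE1, ∃ z ∈ S.NE1,
        w = S.omegaRep (S.pf x y) z ∨ w = S.omegaRep x (S.pf y z)} =
      {w | ∃ x ∈ S.NE1, ∃ y ∈ S.NE1, ∃ z ∈ S.NE1,
        w = S.pf (S.pf x y) z ∨ w = S.pf x (S.pf y z)} := by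
  ext w
  constructor
  · rintro ⟨v, ⟨x, hx, y, hy, z, hz, rfl | rfl⟩, rfl⟩
    · exact ⟨x, hx, y, hy, z, hz, .inl (S.d22_omegaRep _ _)⟩
    · exact ⟨x, hx, y, hy, z, hz, .inr (S.d22_omegaRep _ _)⟩
  · rintro ⟨x, hx, y, hy, z, hz, rfl | rfl⟩
    · exact ⟨_, ⟨x, hx, y, hy, z, hz, .inl rfl⟩, S.d22_omegaRep _ _⟩
    · exact ⟨_, ⟨x, hx, y, hy, z, hz, .inr rfl⟩, S.d22_omegaRep _ _⟩

end SimpAlg3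

/-- For a simplicial commutative algebra, with `ω′(x,y) = s₁x(s₁y − s₀y)` and
`∂̄₂` induced by `d₂`: for all `x, y, z ∈ NE₁`,
`∂̄₂ ω′(x,⟨y,z⟩) = ⟨x,⟨y,z⟩⟩` and `∂̄₂ ω′(⟨x,y⟩,z) = ⟨⟨x,y⟩,z⟩`;
consequently `∂̄₂(P₃′(∂₁)) = P₃(∂₁)` (the `d₂`-image of the ideal generated
by the elements `ω′(⟨x,y⟩,z)`, `ω′(x,⟨y,z⟩)` is `P₃(∂₁)`). -/
theorem d2_omega_formulas {E₀ E₁ E₂ E₃ : Type*}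
    [CommRing E₀] [CommRing E₁] [CommRing E₂] [CommRing E₃]
    (S : SimpAlg3 E₀ E₁ E₂ E₃) :
    (∀ x ∈ S.NE1, ∀ y ∈ S.NE1, ∀ z ∈ S.NE1,
      S.d22 (S.omegaRep x (S.pf y z)) = S.pf x (S.pf y z) ∧
      S.d22 (S.omegaRep (S.pf x y) z) = S.pf (S.pf x y) z) ∧
    Ideal.map S.d22
      (Ideal.span {w : E₂ | ∃ x ∈ S.NE1, ∃ y ∈ S.NE1, ∃ z ∈ S.NE1,
        w = S.omegaRep (S.pf x y) z ∨ w = S.omegaRep x (S.pf y z)}) = S.P3 := by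
  refine ⟨fun x _ y _ z _ => ⟨S.d22_omegaRep _ _, S.d22_omegaRep _ _⟩, ?_⟩
  rw [Ideal.map_span, S.image_d22_omegaRep_peiffer, SimpAlg3.P3]
end
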